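/- Let W_1,...,W_9 be positive weights on the 3×3 grid with the column-proportionality property (W_{i+3} = R₄ W_i and W_{i+6} = R₇ W_i for i = 1,2,3). Then the weighted moment matrix A = Σ_{i=1}^{9} W_i p(x_i) p(x_i)^T with p(x,y) = (1, x, y)^T has the form of a block structure in which the (2,3) and (3,2) entries of A^{-1} vanish, provided A is invertible. -/

import Mathlib

/-!
With column-proportional weights the weight of the grid point in row `b` and column `a`
factorizes as `r b * w a`, while `x` depends only on the column and `y` only on the row.
The moment matrix is then the Hadamard product of a row moment matrix and a column moment
matrix, and this forces `A 0 0 * A 1 2 = A 0 2 * A 1 0`: under the weights, `x` and `y` are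
uncorrelated. For a 3 × 3 matrix that is exactly the vanishing of the cofactor behind
`A⁻¹ 1 2`, and symmetry gives `A⁻¹ 2 1`.
-/

open Finset Matrix

namespace Matrix

variable {R : Type*} [CommRing R]

theorem inv_fin_three_one_two_eq_zero {A : Matrix (Fin 3) (Fin 3) R}
    (h : A 0 0 * A 1 2 = A 0 2 * A 1 0) : A⁻¹ 1 2 = 0 := by
  rw [inv_def, smul_apply, adjugate_fin_three]
  simp [h]

end Matrix

section MomentMatrix

variable {R ι κ n : Type*} [CommRing R]

def momentMatrix (s : Finset ι) (w : ι → R) (p : ι → n → R) : Matrix n n R :=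
  ∑ i ∈ s, w i • vecMulVec (p i) (p i)

theorem momentMatrix_apply (s : Finset ι) (w : ι → R) (p : ι → n → R) (j k : n) :
    momentMatrix s w p j k = ∑ i ∈ s, w i * (p i j * p i k) := by
  simp only [momentMatrix, Matrix.sum_apply, Matrix.smul_apply, vecMulVec_apply, smul_eq_mul]

theorem momentMatrix_isSymm (s : Finset ι) (w : ι → R) (p : ι → n → R) :
    (momentMatrix s w p).IsSymm :=
  IsSymm.ext fun j k => by simp only [momentMatrix_apply, mul_comm (p _ j)]

theorem momentMatrix_range_mul (m k : ℕ) (w : ℕ → R) (p : ℕ → n → R) :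
    momentMatrix (range (m * k)) w p =
      momentMatrix univ (fun q : Fin m × Fin k => w (q.2 + k * q.1))
        (fun q => p (q.2 + k * q.1)) := by
  simp only [momentMatrix]
  rw [sum_range, ← finProdFinEquiv.sum_comp]
  rfl

theorem momentMatrix_product (s : Finset ι) (t : Finset κ) (r : ι → R) (w : κ → R)
    (a : ι → n → R) (b : κ → n → R) :
    momentMatrix (s ×ˢ t) (fun q => r q.1 * w q.2) (fun q => a q.1 * b q.2) =
      momentMatrix s r a ⊙ momentMatrix t w b := by
  ext j k
  rw [hadamard_apply, momentMatrix_apply, momentMatrix_apply, momentMatrix_apply, sum_product,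
    sum_mul_sum]
  exact sum_congr rfl fun i _ => sum_congr rfl fun l _ => by simp only [Pi.mul_apply]; ring

theorem momentMatrix_product_mul_eq {s : Finset ι} {t : Finset κ} {r η : ι → R}
    {w ξ : κ → R} {M : Matrix (Fin 3) (Fin 3) R}
    (hM : M = momentMatrix (s ×ˢ t) (fun q => r q.1 * w q.2) (fun q => ![1, ξ q.2, η q.1])) :
    M 0 0 * M 1 2 = M 0 2 * M 1 0 := by
  have hsplit : (fun q : ι × κ => ![1, ξ q.2, η q.1]) =
      fun q => ![1, 1, η q.1] * ![1, ξ q.2, 1] := by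
    funext q i
    fin_cases i <;> simp
  rw [hsplit, momentMatrix_product s t r w (fun i => ![1, 1, η i]) (fun j => ![1, ξ j, 1])] at hM
  subst hM
  simp only [hadamard_apply, momentMatrix_apply, cons_val_zero, cons_val_one, cons_val_two,
    head_cons, tail_cons, mul_one]
  ring

end MomentMatrix

theorem moment_matrix_inverse_entry_vanishes_general
    (x y W : ℕ → ℝ) (y1 y4 y7 R4 R7 : ℝ)
    (hcol1 : ∀ i < 3, x (i + 3) = x i) (hcol2 : ∀ i < 3, x (i + 6) = x i)
    (hrow1 : ∀ i < 3, y i = y1) (hrow2 : ∀ i < 3, y (i + 3) = y4)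
    (hrow3 : ∀ i < 3, y (i + 6) = y7)
    (hW4 : ∀ i < 3, W (i + 3) = R4 * W i)
    (hW7 : ∀ i < 3, W (i + 6) = R7 * W i)
    (A : Matrix (Fin 3) (Fin 3) ℝ)
    (hA : A = ∑ i ∈ Finset.range 9,
        W i • Matrix.vecMulVec ![1, x i, y i] ![1, x i, y i]) :
    A⁻¹ 1 2 = 0 ∧ A⁻¹ 2 1 = 0 := by
  change A = momentMatrix (range (3 * 3)) W (fun i => ![1, x i, y i]) at hA
  have hgrid : A = momentMatrix (univ ×ˢ univ)
      (fun q : Fin 3 × Fin 3 => ![1, R4, R7] q.1 * W q.2)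
      (fun q => ![1, x q.2, ![y1, y4, y7] q.1]) := by
    rw [hA, momentMatrix_range_mul, univ_product_univ]
    congr 1 <;> funext ⟨b, a⟩ <;> fin_cases b <;>
      simp [hcol1, hcol2, hrow1, hrow2, hrow3, hW4, hW7]
  have hsymm : A.IsSymm := hA ▸ momentMatrix_isSymm _ _ _
  have h12 : A⁻¹ 1 2 = 0 := inv_fin_three_one_two_eq_zero <|
    momentMatrix_product_mul_eq (w := fun a : Fin 3 => W a) (ξ := fun a : Fin 3 => x a) hgrid
  exact ⟨h12, (hsymm.inv.apply 1 2).trans h12⟩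

/-- With column-proportional weights on the 3×3 grid, the inverse of the
weighted moment matrix `A = Σ Wᵢ p(xᵢ) p(xᵢ)ᵀ` (linear basis `p = (1,x,y)ᵀ`)
has vanishing (2,3) and (3,2) entries. -/
theorem moment_matrix_inverse_entry_vanishes
    (x y W : ℕ → ℝ) (y1 y4 y7 R4 R7 : ℝ)
    (hWpos : ∀ i < 9, 0 < W i) (hR4 : 0 < R4) (hR7 : 0 < R7)
    (hcol1 : ∀ i < 3, x (i + 3) = x i) (hcol2 : ∀ i < 3, x (i + 6) = x i)
    (hrow1 : ∀ i < 3, y i = y1) (hrow2 : ∀ i < 3, y (i + 3) = y4)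
    (hrow3 : ∀ i < 3, y (i + 6) = y7)
    (hW4 : ∀ i < 3, W (i + 3) = R4 * W i)
    (hW7 : ∀ i < 3, W (i + 6) = R7 * W i)
    (A : Matrix (Fin 3) (Fin 3) ℝ)
    (hA : A = ∑ i ∈ Finset.range 9,
        W i • Matrix.vecMulVec ![1, x i, y i] ![1, x i, y i])
    (hdet : IsUnit A.det) :
    A⁻¹ 1 2 = 0 ∧ A⁻¹ 2 1 = 0 :=
  moment_matrix_inverse_entry_vanishes_general x y W y1 y4 y7 R4 R7 hcol1 hcol2 hrow1 hrow2 hrow3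
    hW4 hW7 A hA
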